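/- Let B ⊆ ℝ^q be a polyhedron and let E be a face of Φ(B) such that E ⊄ 0⁺B × {0}. Then F := p[E ∩ (B × {1})], where p(y) := (y₁,…,y_q), is a face of B and Φ(F) = E. -/

import Mathlib

open Matrix Set Pointwise

noncomputable section

/-- `cone B = {l • x : l ≥ 0, x ∈ conv B}` -/
def coneOf {E : Type*} [AddCommGroup E] [Module ℝ E] (B : Set E) : Set E :=
  {y | ∃ l : ℝ, 0 ≤ l ∧ ∃ x ∈ convexHull ℝ B, y = l • x}

/-- `F` is a face of the convex set `B`. -/
def IsFaceOf {E : Type*} [AddCommGroup E] [Module ℝ E] (F B : Set E) : Prop :=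
  Convex ℝ F ∧ F ⊆ B ∧
    ∀ y ∈ B, ∀ z ∈ B, ∀ l : ℝ, 0 < l → l < 1 → l • y + (1 - l) • z ∈ F → y ∈ F ∧ z ∈ F

/-- recession cone `0⁺B` of a convex set. -/
def recCone {E : Type*} [AddCommGroup E] [Module ℝ E] (B : Set E) : Set E :=
  {d | ∀ x ∈ B, ∀ t : ℝ, 0 ≤ t → x + t • d ∈ B}

/-- lineality space `L(B) = 0⁺B ∩ (−0⁺B)`. -/
def linealOf {E : Type*} [AddCommGroup E] [Module ℝ E] (B : Set E) : Set E :=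
  recCone B ∩ -recCone B

/-- dimension of (the affine hull of) a set. -/
def sdim {E : Type*} [AddCommGroup E] [Module ℝ E] (B : Set E) : ℕ :=
  Module.finrank ℝ (vectorSpan ℝ B)

def IsPolyhedron {d : ℕ} (B : Set (Fin d → ℝ)) : Prop :=
  ∃ (k : ℕ) (W : Matrix (Fin k) (Fin d) ℝ) (v : Fin k → ℝ), B = {x | v ≤ W.mulVec x}

/-- orthogonal complement (as a set) of a set of vectors. -/
def orthSet {d : ℕ} (L : Set (Fin d → ℝ)) : Set (Fin d → ℝ) :=
  {y | ∀ z ∈ L, y ⬝ᵥ z = 0}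

/-- polar cone `K° = {w : ∀ y ∈ K, wᵀy ≤ 0}`. -/
def polarCone {d : ℕ} (K : Set (Fin d → ℝ)) : Set (Fin d → ℝ) :=
  {w | ∀ y ∈ K, w ⬝ᵥ y ≤ 0}

/-- the last index of `Fin q` (1-based index `q`). -/
def lastIdx (q : ℕ) (hq : 0 < q) : Fin q := ⟨q - 1, by omega⟩

/-- `y ↦ (y,1)`. -/
def lift1 {q : ℕ} (y : Fin q → ℝ) : Fin (q + 1) → ℝ := Fin.snoc y 1

/-- `y ↦ (y,0)`. -/
def lift0 {q : ℕ} (y : Fin q → ℝ) : Fin (q + 1) → ℝ := Fin.snoc y 0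

/-- `p(y) = (y₁,…,y_q)`. -/
def projq {q : ℕ} (y : Fin (q + 1) → ℝ) : Fin q → ℝ := fun i => y i.castSucc

/-- `Φ(B) = cl cone (B × {1})`. -/
def PhiMap {q : ℕ} (B : Set (Fin q → ℝ)) : Set (Fin (q + 1) → ℝ) :=
  closure (coneOf (lift1 '' B))

/-- the block matrix `G = (A; −ZᵀP; 0)`. -/
def Gmat {m n q r : ℕ} (A : Matrix (Fin m) (Fin n) ℝ) (P : Matrix (Fin q) (Fin n) ℝ)
    (Z : Matrix (Fin q) (Fin r) ℝ) : Matrix (Fin (m + r + 1)) (Fin n) ℝ :=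
  fun i j =>
    if h : (i : ℕ) < m then A ⟨i, h⟩ j
    else if h2 : (i : ℕ) < m + r then -(∑ l : Fin q, Z l ⟨(i : ℕ) - m, by omega⟩ * P l j)
    else 0

/-- the block matrix `H` with rows `(0, −b)`, `(Zᵀ, 0)` and `(0,…,0,1)`. -/
def Hmat {m q r : ℕ} (b : Fin m → ℝ) (Z : Matrix (Fin q) (Fin r) ℝ) :
    Matrix (Fin (m + r + 1)) (Fin (q + 1)) ℝ :=
  fun i j =>
    if h : (i : ℕ) < m then (if (j : ℕ) = q then -b ⟨i, h⟩ else 0)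
    else if h2 : (i : ℕ) < m + r then
      (if hj : (j : ℕ) < q then Z ⟨j, hj⟩ ⟨(i : ℕ) - m, by omega⟩ else 0)
    else (if (j : ℕ) = q then 1 else 0)

/-- dual objective `D(u,w) = (w₁,…,w_{q−1}, bᵀu)`. -/
def Dmap {m q : ℕ} (b : Fin m → ℝ) (uw : (Fin m → ℝ) × (Fin q → ℝ)) : Fin q → ℝ :=
  fun i => if (i : ℕ) < q - 1 then uw.2 i else b ⬝ᵥ uw.1

/-- `R* = {v : v₁ = ⋯ = v_{q−1} = 0, v_q ≥ 0}`. -/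
def RstarSet (q : ℕ) (hq : 0 < q) : Set (Fin q → ℝ) :=
  {v | (∀ i : Fin q, (i : ℕ) < q - 1 → v i = 0) ∧ 0 ≤ v (lastIdx q hq)}

/-- dual feasible set `T`. -/
def Tset {m n q r : ℕ} (A : Matrix (Fin m) (Fin n) ℝ) (P : Matrix (Fin q) (Fin n) ℝ)
    (Z : Matrix (Fin q) (Fin r) ℝ) (cbar : Fin q → ℝ) :
    Set ((Fin m → ℝ) × (Fin q → ℝ)) :=
  {uw | ∃ v : Fin r → ℝ, 0 ≤ v ∧ uw.2 = Z.mulVec v ∧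
    Aᵀ.mulVec uw.1 = Pᵀ.mulVec uw.2 ∧ cbar ⬝ᵥ uw.2 = 1 ∧ 0 ≤ uw.1}

/-- `φ(y,w) = Σ_{i<q} y_i w_i + y_q (1 − Σ_{i<q} c̄_i w_i) − w_q`. -/
def phiFn {q : ℕ} (hq : 0 < q) (cbar : Fin q → ℝ) (y w : Fin q → ℝ) : ℝ :=
  (∑ i : Fin q, if (i : ℕ) < q - 1 then y i * w i else 0)
    + y (lastIdx q hq) * (1 - ∑ i : Fin q, if (i : ℕ) < q - 1 then cbar i * w i else 0)
    - w (lastIdx q hq)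

/-- duality map `Ψ(F*) = ⋂_{w ∈ F*} {y ∈ Pset : φ(y,w) = 0}`. -/
def PsiMap {q : ℕ} (hq : 0 < q) (cbar : Fin q → ℝ) (Pset : Set (Fin q → ℝ))
    (Fstar : Set (Fin q → ℝ)) : Set (Fin q → ℝ) :=
  ⋂ w ∈ Fstar, {y ∈ Pset | phiFn hq cbar y w = 0}

/-- `My = (−y₁,…,−y_{q−1}, c̄₁y₁+⋯+c̄_{q−1}y_{q−1} − y_{q+1}, y_q)`. -/
def Mmap {q : ℕ} (hq : 0 < q) (cbar : Fin q → ℝ) (y : Fin (q + 1) → ℝ) : Fin (q + 1) → ℝ :=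
  fun i =>
    if (i : ℕ) < q - 1 then -y i
    else if (i : ℕ) = q - 1 then
      (∑ j : Fin q, if (j : ℕ) < q - 1 then cbar j * y j.castSucc else 0) - y (Fin.last q)
    else y ((lastIdx q hq).castSucc)

/-- `M⁻¹w = (−w₁,…,−w_{q−1}, w_{q+1}, −cᵀw)` where `c = (c̄,0)`. -/
def MinvMap {q : ℕ} (cbar : Fin q → ℝ) (w : Fin (q + 1) → ℝ) : Fin (q + 1) → ℝ :=
  fun i =>
    if (i : ℕ) < q - 1 then -w i
    else if (i : ℕ) = q - 1 then w (Fin.last q)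
    else -((Fin.snoc cbar 0 : Fin (q + 1) → ℝ) ⬝ᵥ w)

/-- `p*(w) = (w₁,…,w_{q−1},w_{q+1})`. -/
def pstarMap {q : ℕ} (w : Fin (q + 1) → ℝ) : Fin q → ℝ :=
  fun i => if (i : ℕ) < q - 1 then w i.castSucc else w (Fin.last q)

/-- `y` generates an extreme ray of the pointed convex cone `Q`. -/
def IsExtremeDir {E : Type*} [AddCommGroup E] [Module ℝ E] (Q : Set E) (y : E) : Prop :=
  y ∈ Q ∧ y ≠ 0 ∧ IsFaceOf (coneOf {y}) Q

/-- `σ(u,w) = (u¹, −p(w))` where `u = (u¹,u²,u³) ∈ ℝ^m×ℝ^r×ℝ`. -/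
def sigmaMap {m q r : ℕ} (uw : (Fin (m + r + 1) → ℝ) × (Fin (q + 1) → ℝ)) :
    (Fin m → ℝ) × (Fin q → ℝ) :=
  (fun i => uw.1 (Fin.castLE (by omega) i), -projq uw.2)

/-!
Write `B = {x | v ≤ W x}`. Since `E` is nonempty, so is `B`, and then `Φ(B)` is the polyhedral
cone `H = {(x, t) | 0 ≤ t, t v ≤ W x}`. The slice map `x ↦ (x, 1)` is affine and `B` is the
preimage of `H`, so the preimage `F` of the face `E` is a face of `B`.

A face of a polyhedron is closed: it contains a point `x₀` that is strict in every inequality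
which is not tight on the whole face, and every point of the polyhedron tight wherever `x₀` is
lies on the face, because the segment from it through `x₀` extends a little beyond `x₀`.
Faces of the cone `H` are cones, so `E` is a closed convex cone. The hypothesis
`E ⊄ 0⁺B × {0}` says that `E` has a point `e₀` of positive height. A closed convex cone `K` in
the half-space `t ≥ 0` with such a point is `Φ` of its slice at height one: points of positive
height are multiples of slice points, and any `w ∈ K` is the limit of `w + s e₀` as `s → 0⁺`.
-/

open Filter Topology

section Faces

variable {V : Type*} [AddCommGroup V] [Module ℝ V]

theorem IsFaceOf.preimage {V' : Type*} [AddCommGroup V'] [Module ℝ V'] {E Q : Set V'}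
    (hE : IsFaceOf E Q) (g : V →ᵃ[ℝ] V') : IsFaceOf (g ⁻¹' E) (g ⁻¹' Q) := by
  refine ⟨hE.1.affine_preimage g, preimage_mono hE.2.1, fun y hy z hz l hl0 hl1 hyz => ?_⟩
  rw [mem_preimage, Convex.combo_affine_apply (by ring)] at hyz
  exact hE.2.2 _ hy _ hz l hl0 hl1 hyz

theorem IsFaceOf.smul_mem {E Q : Set V} (hQ : ∀ a ∈ Q, ∀ t : ℝ, 0 ≤ t → t • a ∈ Q)
    (hE : IsFaceOf E Q) {a : V} (ha : a ∈ E) {t : ℝ} (ht : 0 ≤ t) : t • a ∈ E := by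
  have haQ := hE.2.1 ha
  -- `a` is the midpoint of `t • a` and `(2 - t) • a` if `t ≤ 1`, and lies between
  -- `t • a` and `0` if `t > 1`
  rcases le_or_gt t 1 with h | h
  · refine (hE.2.2 _ (hQ a haQ t ht) _ (hQ a haQ (2 - t) (by linarith)) (1 / 2)
      (by norm_num) (by norm_num) ?_).1
    convert ha using 1
    module
  · refine (hE.2.2 _ (hQ a haQ t ht) _ (hQ a haQ 0 le_rfl) (1 / t)
      (by positivity) ((div_lt_one (by linarith)).2 h) ?_).1
    rwa [zero_smul, smul_zero, add_zero, smul_smul, one_div, inv_mul_cancel₀ (by positivity),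
      one_smul]

theorem IsFaceOf.mem_of_add_smul_sub_mem {E D : Set V} (hE : IsFaceOf E D) {x₀ z : V}
    (hx₀ : x₀ ∈ E) (hz : z ∈ D) {ε : ℝ} (hε : 0 < ε) (hw : x₀ + ε • (x₀ - z) ∈ D) :
    z ∈ E := by
  refine (hE.2.2 _ hw _ hz (1 / (1 + ε)) (by positivity)
    ((div_lt_one (by linarith)).2 (by linarith)) ?_).2
  convert hx₀ using 1
  match_scalars
  · field_simp
  · field_simp
    ring

theorem Convex.add_mem_of_smul_mem {K : Set V} (hK : Convex ℝ K)
    (hKsmul : ∀ a ∈ K, ∀ t : ℝ, 0 ≤ t → t • a ∈ K) {a b : V} (ha : a ∈ K) (hb : b ∈ K) :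
    a + b ∈ K := by
  convert hKsmul _ (hK ha hb (by norm_num : (0 : ℝ) ≤ 1 / 2) (by norm_num : (0 : ℝ) ≤ 1 / 2)
    (by norm_num)) 2 (by norm_num) using 1
  module

end Faces

section PolyhedralFaces

variable {ι n : Type*} [Fintype ι] [Fintype n] (C : Matrix ι n ℝ) (b : ι → ℝ)

theorem Convex.exists_forall_lt_mulVec {E : Set (n → ℝ)} (hE : Convex ℝ E)
    (hED : ∀ x ∈ E, b ≤ C *ᵥ x) (hne : E.Nonempty) :
    ∃ x₀ ∈ E, ∀ i, (∃ y ∈ E, b i < (C *ᵥ y) i) → b i < (C *ᵥ x₀) i := by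
  classical
  suffices ∀ s : Finset ι,
      ∃ x₀ ∈ E, ∀ i ∈ s, (∃ y ∈ E, b i < (C *ᵥ y) i) → b i < (C *ᵥ x₀) i by
    obtain ⟨x₀, hx₀, h⟩ := this Finset.univ
    exact ⟨x₀, hx₀, fun i => h i (Finset.mem_univ i)⟩
  intro s
  induction s using Finset.induction_on with
  | empty => exact ⟨hne.some, hne.some_mem, by simp⟩
  | insert j s _ ih =>
    obtain ⟨x, hx, hxs⟩ := ih
    by_cases hj : ∃ y ∈ E, b j < (C *ᵥ y) j
    · obtain ⟨y, hy, hyj⟩ := hj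
      refine ⟨(1 / 2 : ℝ) • x + (1 / 2 : ℝ) • y,
        hE hx hy (by norm_num) (by norm_num) (by norm_num), fun i hi hstrict => ?_⟩
      have hmid : (C *ᵥ ((1 / 2 : ℝ) • x + (1 / 2 : ℝ) • y)) i
          = (C *ᵥ x) i / 2 + (C *ᵥ y) i / 2 := by
        simp only [mulVec_add, mulVec_smul, Pi.add_apply, Pi.smul_apply, smul_eq_mul]
        ring
      have hxi := hED x hx i
      have hyi := hED y hy i
      rcases Finset.mem_insert.1 hi with rfl | hi
      · linarith
      · linarith [hxs i hi hstrict]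
    · refine ⟨x, hx, fun i hi hstrict => ?_⟩
      rcases Finset.mem_insert.1 hi with rfl | hi
      · exact absurd hstrict hj
      · exact hxs i hi hstrict

theorem exists_pos_add_smul_sub_mem_polyhedron {x₀ z : n → ℝ} (hx₀ : b ≤ C *ᵥ x₀)
    (htight : ∀ i, (C *ᵥ x₀) i = b i → (C *ᵥ z) i = b i) :
    ∃ ε : ℝ, 0 < ε ∧ b ≤ C *ᵥ (x₀ + ε • (x₀ - z)) := by
  have hrow : ∀ ε : ℝ, ∀ i, (C *ᵥ (x₀ + ε • (x₀ - z))) i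
      = (C *ᵥ x₀) i + ε * ((C *ᵥ x₀) i - (C *ᵥ z) i) := by
    intro ε i
    simp only [mulVec_add, mulVec_smul, mulVec_sub, Pi.add_apply, Pi.smul_apply, Pi.sub_apply,
      smul_eq_mul]
  have hev : ∀ᶠ ε in 𝓝 (0 : ℝ), ∀ i, b i ≤ (C *ᵥ (x₀ + ε • (x₀ - z))) i := by
    refine eventually_all.2 fun i => ?_
    simp only [hrow]
    rcases (hx₀ i).eq_or_lt with h | h
    · exact Eventually.of_forall fun ε => by rw [← h, htight i h.symm]; simp
    · have hlim : Tendsto (fun ε : ℝ => (C *ᵥ x₀) i + ε * ((C *ᵥ x₀) i - (C *ᵥ z) i)) (𝓝 0)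
          (𝓝 ((C *ᵥ x₀) i)) :=
        (continuous_const.add (continuous_id.mul continuous_const)).tendsto' _ _ (by simp)
      exact (hlim.eventually_const_lt h).mono fun _ => le_of_lt
  obtain ⟨ε, hε, hεpos⟩ := ((hev.filter_mono nhdsWithin_le_nhds).and
    (self_mem_nhdsWithin : ∀ᶠ ε in 𝓝[>] (0 : ℝ), 0 < ε)).exists
  exact ⟨ε, hεpos, hε⟩

theorem IsFaceOf.isClosed_of_polyhedron {E : Set (n → ℝ)}
    (hE : IsFaceOf E {x | b ≤ C *ᵥ x}) : IsClosed E := by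
  rcases E.eq_empty_or_nonempty with rfl | hne
  · exact isClosed_empty
  obtain ⟨x₀, hx₀, hstrict⟩ := hE.1.exists_forall_lt_mulVec C b (fun x hx => hE.2.1 hx) hne
  have hEq : E = {x | b ≤ C *ᵥ x} ∩ ⋂ i ∈ {i | (C *ᵥ x₀) i = b i}, {x | (C *ᵥ x) i = b i} := by
    apply subset_antisymm
    · refine fun x hx => ⟨hE.2.1 hx, mem_iInter₂.2 fun i hi => ?_⟩
      by_contra hne
      exact (hstrict i ⟨x, hx, (hE.2.1 hx i).lt_of_ne' hne⟩).ne' hi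
    · rintro z ⟨hz, hztight⟩
      obtain ⟨ε, hε, hw⟩ := exists_pos_add_smul_sub_mem_polyhedron C b (hE.2.1 hx₀)
        fun i hi => mem_iInter₂.1 hztight i hi
      exact hE.mem_of_add_smul_sub_mem hx₀ hz hε hw
  have hrows : Continuous fun x : n → ℝ => C *ᵥ x := continuous_const.matrix_mulVec continuous_id
  rw [hEq]
  exact (isClosed_le continuous_const hrows).inter
    (isClosed_biInter fun i _ => isClosed_eq ((continuous_apply i).comp hrows) continuous_const)

end PolyhedralFaces

section Slices

variable {q : ℕ}

@[simp] theorem lift1_last (x : Fin q → ℝ) : lift1 x (Fin.last q) = 1 := Fin.snoc_last _ _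

@[simp] theorem init_lift1 (x : Fin q → ℝ) : Fin.init (lift1 x) = x := Fin.init_snoc _ _

@[simp] theorem projq_lift1 (x : Fin q → ℝ) : projq (lift1 x) = x := Fin.init_snoc _ _

theorem lift1_init {w : Fin (q + 1) → ℝ} (hw : w (Fin.last q) = 1) :
    lift1 (Fin.init w) = w := by
  rw [lift1, ← hw, Fin.snoc_init_self]

theorem lift0_init {w : Fin (q + 1) → ℝ} (hw : w (Fin.last q) = 0) :
    lift0 (Fin.init w) = w := by
  rw [lift0, ← hw, Fin.snoc_init_self]

def lift1AffineMap (q : ℕ) : (Fin q → ℝ) →ᵃ[ℝ] (Fin (q + 1) → ℝ) where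
  toFun := lift1
  linear :=
    { toFun := lift0
      map_add' x y := by
        ext j
        refine Fin.lastCases ?_ (fun i => ?_) j <;> simp [lift0]
      map_smul' t x := by
        ext j
        refine Fin.lastCases ?_ (fun i => ?_) j <;> simp [lift0] }
  map_vadd' x y := by
    ext j
    refine Fin.lastCases ?_ (fun i => ?_) j <;> simp [lift0, lift1]

theorem projq_image_inter_lift1_image (E : Set (Fin (q + 1) → ℝ)) (B : Set (Fin q → ℝ)) :
    projq '' (E ∩ lift1 '' B) = B ∩ lift1 ⁻¹' E := by
  rw [inter_comm, ← image_inter_preimage, image_image]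
  simp

theorem mem_coneOf_lift1_preimage {K : Set (Fin (q + 1) → ℝ)}
    (hKsmul : ∀ a ∈ K, ∀ t : ℝ, 0 ≤ t → t • a ∈ K) {w : Fin (q + 1) → ℝ} (hw : w ∈ K)
    (hpos : 0 < w (Fin.last q)) : w ∈ coneOf (lift1 '' (lift1 ⁻¹' K)) := by
  set t := w (Fin.last q)
  have hnorm : (t⁻¹ • w) (Fin.last q) = 1 := inv_mul_cancel₀ hpos.ne'
  refine ⟨t, hpos.le, t⁻¹ • w,
    subset_convexHull ℝ _ ⟨Fin.init (t⁻¹ • w), ?_, lift1_init hnorm⟩, ?_⟩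
  · rw [mem_preimage, lift1_init hnorm]
    exact hKsmul w hw _ (inv_nonneg.2 hpos.le)
  · rw [smul_smul, mul_inv_cancel₀ hpos.ne', one_smul]

theorem PhiMap_lift1_preimage {K : Set (Fin (q + 1) → ℝ)} (hKc : IsClosed K)
    (hK : Convex ℝ K) (hKsmul : ∀ a ∈ K, ∀ t : ℝ, 0 ≤ t → t • a ∈ K)
    (hK0 : ∀ w ∈ K, 0 ≤ w (Fin.last q)) {e₀ : Fin (q + 1) → ℝ} (he₀ : e₀ ∈ K)
    (hpos : 0 < e₀ (Fin.last q)) :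
    PhiMap (lift1 ⁻¹' K) = K := by
  refine subset_antisymm (closure_minimal ?_ hKc) fun w hw => ?_
  · rintro _ ⟨t, ht, x, hx, rfl⟩
    exact hKsmul x (convexHull_min (image_preimage_subset _ _) hK hx) t ht
  · have hmem : ∀ s : ℝ, 0 < s → w + s • e₀ ∈ coneOf (lift1 '' (lift1 ⁻¹' K)) := fun s hs =>
      mem_coneOf_lift1_preimage hKsmul
        (hK.add_mem_of_smul_mem hKsmul hw (hKsmul e₀ he₀ s hs.le))
        (by simpa using add_pos_of_nonneg_of_pos (hK0 w hw) (mul_pos hs hpos))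
    have hlim : Tendsto (fun s : ℝ => w + s • e₀) (𝓝[>] 0) (𝓝 w) :=
      ((continuous_const.add (continuous_id.smul continuous_const)).tendsto' 0 w
        (by simp)).mono_left nhdsWithin_le_nhds
    exact mem_closure_of_tendsto hlim (eventually_nhdsWithin_of_forall hmem)

end Slices

section HomCone

variable {k q : ℕ} (W : Matrix (Fin k) (Fin q) ℝ) (v : Fin k → ℝ)

/-- Row `none` is `w ↦ w_{q+1}` and row `some i` is `w ↦ (W p(w))ᵢ - vᵢ w_{q+1}`. -/
def homMatrix : Matrix (Option (Fin k)) (Fin (q + 1)) ℝ :=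
  Matrix.of fun o => o.elim (Pi.single (Fin.last q) 1) fun i => Fin.snoc (W i) (-v i)

def homCone : Set (Fin (q + 1) → ℝ) := {w | 0 ≤ homMatrix W v *ᵥ w}

variable {W v}

theorem mem_homCone_iff {w : Fin (q + 1) → ℝ} :
    w ∈ homCone W v ↔ 0 ≤ w (Fin.last q) ∧ w (Fin.last q) • v ≤ W *ᵥ Fin.init w := by
  have hnone : (homMatrix W v *ᵥ w) none = w (Fin.last q) := by
    simp [homMatrix, mulVec, single_dotProduct]
  have hsome : ∀ i,
      (homMatrix W v *ᵥ w) (some i) = (W *ᵥ Fin.init w) i - v i * w (Fin.last q) := by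
    intro i
    simp [homMatrix, mulVec, dotProduct, Fin.sum_univ_castSucc, Fin.init]
    ring
  simp only [homCone, mem_ofPred_eq, Pi.le_def, Option.forall, hnone, hsome, Pi.zero_apply,
    Pi.smul_apply, smul_eq_mul, sub_nonneg, mul_comm (w (Fin.last q))]

theorem lift1_mem_homCone_iff {x : Fin q → ℝ} : lift1 x ∈ homCone W v ↔ v ≤ W *ᵥ x := by
  simp [mem_homCone_iff]

theorem preimage_lift1_homCone : lift1 ⁻¹' homCone W v = {x | v ≤ W *ᵥ x} :=
  ext fun _ => lift1_mem_homCone_iff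

theorem isClosed_homCone : IsClosed (homCone W v) :=
  isClosed_le continuous_const (continuous_const.matrix_mulVec continuous_id)

theorem convex_homCone : Convex ℝ (homCone W v) := by
  intro x hx y hy a b ha hb _
  simp only [homCone, mem_ofPred_eq, mulVec_add, mulVec_smul] at hx hy ⊢
  exact add_nonneg (smul_nonneg ha hx) (smul_nonneg hb hy)

theorem smul_mem_homCone : ∀ w ∈ homCone W v, ∀ t : ℝ, 0 ≤ t → t • w ∈ homCone W v := by
  intro w hw t ht
  simp only [homCone, mem_ofPred_eq, mulVec_smul] at hw ⊢
  exact smul_nonneg ht hw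

theorem PhiMap_eq_homCone (hB : {x | v ≤ W *ᵥ x}.Nonempty) :
    PhiMap {x | v ≤ W *ᵥ x} = homCone W v := by
  obtain ⟨x₀, hx₀⟩ := hB
  rw [← preimage_lift1_homCone]
  exact PhiMap_lift1_preimage isClosed_homCone convex_homCone smul_mem_homCone
    (fun w hw => (mem_homCone_iff.1 hw).1) (lift1_mem_homCone_iff.2 hx₀) (by simp)

theorem mem_recCone_of_mulVec_nonneg {d : Fin q → ℝ} (hd : 0 ≤ W *ᵥ d) :
    d ∈ recCone {x | v ≤ W *ᵥ x} := by
  intro x hx t ht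
  simp only [mem_ofPred_eq, mulVec_add, mulVec_smul] at hx ⊢
  exact le_add_of_le_of_nonneg hx (smul_nonneg ht hd)

theorem exists_pos_last_of_not_subset {E : Set (Fin (q + 1) → ℝ)} (hE : E ⊆ homCone W v)
    (hEnot : ¬ E ⊆ lift0 '' recCone {x | v ≤ W *ᵥ x}) : ∃ e ∈ E, 0 < e (Fin.last q) := by
  contrapose! hEnot
  intro w hw
  obtain ⟨h0, hle⟩ := mem_homCone_iff.1 (hE hw)
  have hlast : w (Fin.last q) = 0 := le_antisymm (hEnot w hw) h0
  refine ⟨Fin.init w, mem_recCone_of_mulVec_nonneg ?_, lift0_init hlast⟩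
  simpa [hlast] using hle

end HomCone

theorem nonempty_of_nonempty_PhiMap {q : ℕ} {B : Set (Fin q → ℝ)} (h : (PhiMap B).Nonempty) :
    B.Nonempty := by
  rw [nonempty_iff_ne_empty] at h ⊢
  rintro rfl
  simp [PhiMap, coneOf] at h

/-- If `E` is a face of `Φ(B)` with `E ⊄ 0⁺B × {0}`, then
`F := p[E ∩ (B × {1})]` is a face of `B` and `Φ(F) = E`. -/
theorem stmt7 (q : ℕ) (B : Set (Fin q → ℝ)) (hB : IsPolyhedron B)
    (E : Set (Fin (q + 1) → ℝ)) (hE : IsFaceOf E (PhiMap B))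
    (hEnot : ¬ E ⊆ lift0 '' recCone B) :
    IsFaceOf (projq '' (E ∩ lift1 '' B)) B ∧ PhiMap (projq '' (E ∩ lift1 '' B)) = E := by
  have hBne : B.Nonempty :=
    nonempty_of_nonempty_PhiMap (((nonempty_of_not_subset hEnot).mono sdiff_subset).mono hE.2.1)
  obtain ⟨k, W, v, rfl⟩ := hB
  rw [PhiMap_eq_homCone hBne] at hE
  obtain ⟨e₀, he₀, hpos⟩ := exists_pos_last_of_not_subset hE.2.1 hEnot
  rw [projq_image_inter_lift1_image, ← preimage_lift1_homCone, ← preimage_inter,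
    inter_eq_right.2 hE.2.1]
  exact ⟨hE.preimage (lift1AffineMap q),
    PhiMap_lift1_preimage (hE.isClosed_of_polyhedron _ _) hE.1
      (fun a ha t ht => hE.smul_mem smul_mem_homCone ha ht)
      (fun w hw => (mem_homCone_iff.1 (hE.2.1 hw)).1) he₀ hpos⟩
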